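/- Let I be an ideal on ℕ. Suppose there exists an uncountable family 𝒜 of subsets of ℕ such that no member of 𝒜 belongs to I, while the intersection of any two distinct members of 𝒜 belongs to I. Then the subspace c_{0,I} is not complemented in ℓ∞; that is, there is no bounded linear projection from ℓ∞ onto c_{0,I}. -/

import Mathlib

open scoped ENNReal
set_option synthInstance.maxHeartbeats 1000000
set_option maxHeartbeats 1000000

noncomputable section

/-- The Banach space `ℓ∞` of bounded real sequences with the supremum norm. -/
abbrev LInf : Type := lp (fun _ : ℕ => ℝ) ∞

/-- An ideal on `ℕ`: a family of subsets of `ℕ` closed under taking subsets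
and finite unions (in particular it contains the empty union `∅`). -/
structure SetIdeal where
  sets : Set (Set ℕ)
  subset_mem : ∀ ⦃A B : Set ℕ⦄, A ∈ sets → B ⊆ A → B ∈ sets
  union_mem : ∀ ⦃A B : Set ℕ⦄, A ∈ sets → B ∈ sets → A ∪ B ∈ sets
  empty_mem : ∅ ∈ sets

/-- The set of bounded sequences converging to `0` along the ideal `I`:
for every `ε > 0` the set `{n | ε ≤ |x n|}` belongs to `I`. -/
def c0Set (I : SetIdeal) : Set LInf :=
  {x | ∀ ε : ℝ, 0 < ε → {n : ℕ | ε ≤ |x n|} ∈ I.sets}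

/-- `c_{0,I}`, as a linear subspace of `ℓ∞`. -/
def c0I (I : SetIdeal) : Submodule ℝ LInf where
  carrier := c0Set I
  zero_mem' := by
    intro ε hε
    have h : {n : ℕ | ε ≤ |(0 : LInf) n|} = (∅ : Set ℕ) := by
      ext n
      simp [lp.coeFn_zero, hε.not_ge]
    rw [h]; exact I.empty_mem
  add_mem' := by
    intro x y hx hy ε hε
    refine I.subset_mem (I.union_mem (hx (ε / 2) (by linarith)) (hy (ε / 2) (by linarith))) ?_
    intro n hn
    simp only [Set.mem_setOf_eq, lp.coeFn_add, Pi.add_apply] at hn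
    by_contra hmem
    simp only [Set.mem_union, Set.mem_setOf_eq, not_or, not_le] at hmem
    have := abs_add_le (x n) (y n)
    linarith [hn, hmem.1, hmem.2]
  smul_mem' := by
    intro c x hx ε hε
    rcases eq_or_ne c 0 with rfl | hc
    · have h : {n : ℕ | ε ≤ |((0 : ℝ) • x) n|} = (∅ : Set ℕ) := by
        ext n
        simp [lp.coeFn_smul, hε.not_ge]
      rw [h]; exact I.empty_mem
    · have hcpos : 0 < |c| := abs_pos.mpr hc
      refine I.subset_mem (hx (ε / |c|) (by positivity)) ?_
      intro n hn
      simp only [Set.mem_setOf_eq, lp.coeFn_smul, Pi.smul_apply, smul_eq_mul, abs_mul] at hn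
      simp only [Set.mem_setOf_eq]
      rw [div_le_iff₀ hcpos]
      linarith [hn]

/-!
If `P` projects `ℓ∞` onto `c_{0,I}`, every coordinate functional `f = eₙ ∘ (1 - P)` vanishes on
`c_{0,I}`. For finitely many members of `𝒜`, deleting their pairwise intersections (a set in `I`)
changes no value of `f` on their indicators and makes them disjoint, so a signed sum of the
indicators has norm at most `1`; hence `∑ |f 1_A| ≤ ‖f‖` and `f 1_A ≠ 0` for only countably
many `A ∈ 𝒜`. Since `1_A ∉ c_{0,I}`, each `A ∈ 𝒜` has some `n` with `eₙ (1 - P) 1_A ≠ 0`,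
so `𝒜` would be countable.
-/

open Function

theorem SetIdeal.biUnion_mem (I : SetIdeal) {ι : Type*} {s : Finset ι} {t : ι → Set ℕ}
    (h : ∀ i ∈ s, t i ∈ I.sets) : (⋃ i ∈ s, t i) ∈ I.sets := by
  classical
  induction s using Finset.induction_on with
  | empty => simpa using I.empty_mem
  | insert i s _ ih =>
    rw [Finset.set_biUnion_insert]
    exact I.union_mem (h i (s.mem_insert_self i)) (ih fun j hj => h j (Finset.mem_insert_of_mem hj))

def indicatorLInf (A : Set ℕ) : LInf :=
  ⟨A.indicator 1, memℓp_infty ⟨1, by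
    rintro _ ⟨n, rfl⟩
    by_cases hn : n ∈ A <;> simp [hn]⟩⟩

@[simp] theorem indicatorLInf_apply (A : Set ℕ) (n : ℕ) :
    indicatorLInf A n = A.indicator 1 n := rfl

theorem indicatorLInf_mem_c0I_iff (I : SetIdeal) (A : Set ℕ) :
    indicatorLInf A ∈ c0I I ↔ A ∈ I.sets := by
  refine ⟨fun h => ?_, fun h ε hε => I.subset_mem h fun n hn => ?_⟩
  · convert h 1 one_pos using 1
    ext n
    by_cases hn : n ∈ A <;> simp [hn]
  · by_contra hnA
    simp [hnA] at hn
    linarith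

theorem indicatorLInf_eq_diff_add_inter (A D : Set ℕ) :
    indicatorLInf A = indicatorLInf (A \ D) + indicatorLInf (A ∩ D) := by
  ext n
  by_cases hA : n ∈ A <;> by_cases hD : n ∈ D <;> simp [hA, hD]

theorem norm_sum_smul_indicatorLInf_le {ι : Type*} {s : Finset ι} {B : ι → Set ℕ}
    (hB : (s : Set ι).PairwiseDisjoint B) {c : ι → ℝ} (hc : ∀ i ∈ s, |c i| ≤ 1) :
    ‖∑ i ∈ s, c i • indicatorLInf (B i)‖ ≤ 1 := by
  classical
  refine lp.norm_le_of_forall_le zero_le_one fun n => ?_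
  have hsum : (∑ i ∈ s, c i • indicatorLInf (B i) : LInf) n
      = ∑ i ∈ s, c i * (B i).indicator 1 n :=
    (map_sum (lp.evalCLM ℝ (fun _ : ℕ => ℝ) ∞ n) _ s).trans (by simp [lp.evalCLM])
  rw [hsum, Real.norm_eq_abs]
  by_cases hn : ∃ i ∈ s, n ∈ B i
  · obtain ⟨i, hi, hni⟩ := hn
    rw [Finset.sum_eq_single_of_mem i hi fun j hj hji => ?_]
    · simpa [hni] using hc i hi
    · have hnj : n ∉ B j := fun hnj =>
        Set.disjoint_left.1 (hB hj hi hji) hnj hni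
      simp [hnj]
  · push Not at hn
    rw [Finset.sum_eq_zero fun i hi => by simp [hn i hi]]
    simp

theorem sum_abs_apply_indicatorLInf_le_opNorm (f : LInf →L[ℝ] ℝ) {ι : Type*} {s : Finset ι}
    {B : ι → Set ℕ} (hB : (s : Set ι).PairwiseDisjoint B) :
    ∑ i ∈ s, |f (indicatorLInf (B i))| ≤ ‖f‖ := by
  set σ : ι → ℝ := fun i => SignType.sign (f (indicatorLInf (B i)))
  have hσ : ∀ i ∈ s, |σ i| ≤ 1 := fun i _ => by
    rcases SignType.trichotomy (SignType.sign (f (indicatorLInf (B i)))) with h | h | h <;>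
      simp [σ, h]
  calc ∑ i ∈ s, |f (indicatorLInf (B i))|
      = f (∑ i ∈ s, σ i • indicatorLInf (B i)) := by simp [σ, map_sum, sign_mul_self]
    _ ≤ ‖f (∑ i ∈ s, σ i • indicatorLInf (B i))‖ := le_abs_self _
    _ ≤ ‖f‖ * ‖∑ i ∈ s, σ i • indicatorLInf (B i)‖ := f.le_opNorm _
    _ ≤ ‖f‖ := mul_le_of_le_one_right (norm_nonneg f) (norm_sum_smul_indicatorLInf_le hB hσ)

theorem sum_abs_apply_indicatorLInf_le_opNorm_of_inter_mem (I : SetIdeal) {f : LInf →L[ℝ] ℝ}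
    (hf : ∀ x ∈ c0I I, f x = 0) {ι : Type*} {A : ι → Set ℕ}
    (hA : Pairwise fun i j => A i ∩ A j ∈ I.sets) (s : Finset ι) :
    ∑ i ∈ s, |f (indicatorLInf (A i))| ≤ ‖f‖ := by
  set D := ⋃ p ∈ s.offDiag, A p.1 ∩ A p.2
  have hD : D ∈ I.sets := I.biUnion_mem fun p hp => hA (Finset.mem_offDiag.1 hp).2.2
  have hdisj : (s : Set ι).PairwiseDisjoint fun i => A i \ D := fun i hi j hj hij =>
    Set.disjoint_left.2 fun n hni hnj =>
      hni.2 (Set.mem_biUnion (x := (i, j)) (Finset.mem_offDiag.2 ⟨hi, hj, hij⟩) ⟨hni.1, hnj.1⟩)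
  have hfA : ∀ i, f (indicatorLInf (A i)) = f (indicatorLInf (A i \ D)) := fun i => by
    rw [indicatorLInf_eq_diff_add_inter (A i) D, map_add,
      hf _ ((indicatorLInf_mem_c0I_iff I _).2 (I.subset_mem hD Set.inter_subset_right)), add_zero]
  simpa only [hfA] using sum_abs_apply_indicatorLInf_le_opNorm f hdisj

theorem countable_support_apply_indicatorLInf (I : SetIdeal) {f : LInf →L[ℝ] ℝ}
    (hf : ∀ x ∈ c0I I, f x = 0) {ι : Type*} {A : ι → Set ℕ}
    (hA : Pairwise fun i j => A i ∩ A j ∈ I.sets) :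
    (support fun i => f (indicatorLInf (A i))).Countable :=
  (summable_of_sum_le (fun _ => abs_nonneg _)
    (sum_abs_apply_indicatorLInf_le_opNorm_of_inter_mem I hf hA)).of_abs.countable_support

/-- **Leonetti's theorem.** If there is an uncountable family `𝒜` of sets not
in the ideal `I` whose pairwise intersections lie in `I`, then `c_{0,I}` is not
complemented in `ℓ∞`: there is no bounded linear projection of `ℓ∞` onto it. -/
theorem c0I_not_complemented (I : SetIdeal) (𝒜 : Set (Set ℕ))
    (h𝒜 : ¬𝒜.Countable)
    (hA : ∀ A ∈ 𝒜, A ∉ I.sets)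
    (hAB : ∀ A ∈ 𝒜, ∀ B ∈ 𝒜, A ≠ B → A ∩ B ∈ I.sets) :
    ¬∃ P : LInf →L[ℝ] LInf, (∀ x, P (P x) = P x) ∧
      LinearMap.range (P : LInf →ₗ[ℝ] LInf) = c0I I := by
  rintro ⟨P, hPP, hPrange⟩
  set f : ℕ → LInf →L[ℝ] ℝ := fun n => lp.evalCLM ℝ _ ∞ n ∘L (ContinuousLinearMap.id ℝ _ - P)
  have hf : ∀ n, ∀ x ∈ c0I I, f n x = 0 := by
    rintro n x hx
    obtain ⟨y, rfl⟩ := hPrange ▸ hx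
    simp [f, lp.evalCLM, hPP]
  have hcover : ∀ A : 𝒜, ∃ n, f n (indicatorLInf A) ≠ 0 := by
    rintro ⟨A, hA𝒜⟩
    by_contra! h
    have hfix : P (indicatorLInf A) = indicatorLInf A := by
      ext n
      exact (sub_eq_zero.1 (h n)).symm
    refine hA A hA𝒜 ((indicatorLInf_mem_c0I_iff I A).1 ?_)
    exact hPrange ▸ hfix ▸ LinearMap.mem_range_self (P : LInf →ₗ[ℝ] LInf) _
  have hpair : Pairwise fun A B : 𝒜 => (A : Set ℕ) ∩ B ∈ I.sets := fun A B hne =>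
    hAB A A.2 B B.2 (Subtype.coe_ne_coe.2 hne)
  refine h𝒜 (Set.countable_coe_iff.1 (Set.countable_univ_iff.1 ?_))
  exact (Set.countable_iUnion fun n => countable_support_apply_indicatorLInf I (hf n) hpair).mono
    fun A _ => Set.mem_iUnion.2 (hcover A)
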